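/- arXiv:1809.01422 — 2 statements merged into one kernel-verified Lean document; each statement's English description precedes it below -/
import Mathlib

section
/- For any T > 0, any positive integer n, and any θ ∈ ℝ, the trigonometric polynomial g_{T,n}(θ) = Σ_{l=−(n−1)}^{n−1} γ_l e^{ilθ} satisfies |g_{T,n}(θ)| ≤ ∫_ℝ |R(τ)| dτ. -/
open MeasureTheory Filter Finset Real

/-- `γ_l = (n/T) ∫_{t_0}^{t_1} ∫_{t_l}^{t_{l+1}} R(v-u) dv du`, where `t_i = i T / n`. -/
noncomputable def gam (R : ℝ → ℝ) (T : ℝ) (n : ℕ) (l : ℤ) : ℝ :=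
  ((n : ℝ) / T) *
    ∫ u in (0:ℝ)..(T / n), ∫ v in ((l : ℝ) * T / n)..(((l : ℝ) + 1) * T / n), R (v - u)

/-!
Write `c = T / n`. Then `γ_l` is the average over `u ∈ [0, c]` of `∫_{lc}^{(l+1)c} R(v - u) dv`,
so `g_{T,n}(θ)` is the average over `u` of `∑_l e^{ilθ} ∫_{lc}^{(l+1)c} R(v - u) dv`. For each
fixed `u` the windows `[lc, (l+1)c]` tile an interval, so this sum has modulus at most
`∫_{-(n-1)c}^{nc} |R(v - u)| dv ≤ ∫ |R|`.
-/

section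

variable {E : Type*} [NormedAddCommGroup E] [NormedSpace ℝ E] {f : ℝ → E}

theorem intervalIntegral.sum_integral_adjacent_intervals_Ico_int {x : ℤ → ℝ} {m n : ℤ}
    (hmn : m ≤ n) (hf : ∀ a b, IntervalIntegrable f volume a b) :
    ∑ k ∈ Ico m n, ∫ t in x k..x (k + 1), f t = ∫ t in x m..x n, f t := by
  induction n, hmn using Int.leInduction with
  | base => simp
  | succ n hmn ih =>
    rw [← insert_Ico_right_eq_Ico_add_one hmn, sum_insert right_notMem_Ico, ih, add_comm,
      intervalIntegral.integral_add_adjacent_intervals (hf _ _) (hf _ _)]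

theorem intervalIntegral.continuous_integral_comp_sub_right
    (hf : ∀ a b, IntervalIntegrable f volume a b) (a b : ℝ) :
    Continuous fun u => ∫ v in a..b, f (v - u) := by
  have hprim := intervalIntegral.continuous_primitive hf 0
  have hdiff : (fun u => ∫ v in a..b, f (v - u)) =
      fun u => (∫ v in 0..b - u, f v) - ∫ v in 0..a - u, f v := by
    ext u
    rw [intervalIntegral.integral_comp_sub_right,
      intervalIntegral.integral_interval_sub_left (hf _ _) (hf _ _)]
  rw [hdiff]
  fun_prop

end

theorem intervalIntegral.integral_le_integral_of_nonneg {g : ℝ → ℝ} {a b : ℝ} (hab : a ≤ b)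
    (hg : Integrable g) (hg0 : 0 ≤ g) : ∫ t in a..b, g t ≤ ∫ t, g t := by
  rw [intervalIntegral.integral_of_le hab]
  exact setIntegral_le_integral hg (Eventually.of_forall hg0)

theorem norm_sum_mul_integral_window_le {f : ℝ → ℝ} (hf : Integrable f) {c : ℝ} (hc : 0 ≤ c)
    {a b : ℤ} (hab : a ≤ b) (w : ℤ → ℂ) (hw : ∀ l, ‖w l‖ ≤ 1) (u : ℝ) :
    ‖∑ l ∈ Ico a b, ((∫ v in l * c..(l + 1) * c, f (v - u) : ℝ) : ℂ) * w l‖ ≤ ∫ t, |f t| := by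
  have habs : ∀ a b, IntervalIntegrable (fun t => |f (t - u)|) volume a b :=
    fun _ _ => (hf.comp_sub_right u).abs.intervalIntegrable
  calc ‖∑ l ∈ Ico a b, ((∫ v in l * c..(l + 1) * c, f (v - u) : ℝ) : ℂ) * w l‖
      ≤ ∑ l ∈ Ico a b, ∫ v in l * c..(l + 1) * c, |f (v - u)| := by
        refine (norm_sum_le _ _).trans (sum_le_sum fun l _ => ?_)
        rw [norm_mul, Complex.norm_real, Real.norm_eq_abs]
        refine (mul_le_of_le_one_right (abs_nonneg _) (hw l)).trans ?_
        exact intervalIntegral.abs_integral_le_integral_abs (by nlinarith)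
    _ = ∫ v in a * c..b * c, |f (v - u)| := by
        simpa using intervalIntegral.sum_integral_adjacent_intervals_Ico_int
          (x := fun l : ℤ => l * c) hab habs
    _ = ∫ t in a * c - u..b * c - u, |f t| :=
        intervalIntegral.integral_comp_sub_right (fun t => |f t|) u
    _ ≤ ∫ t, |f t| := by
        have : (a : ℝ) ≤ b := by exact_mod_cast hab
        exact intervalIntegral.integral_le_integral_of_nonneg (by nlinarith) hf.abs
          fun t => abs_nonneg _

theorem sum_gam_mul_eq_inv_mul_integral {R : ℝ → ℝ} (hR : ∀ a b, IntervalIntegrable R volume a b)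
    (T : ℝ) (n : ℕ) (s : Finset ℤ) (w : ℤ → ℂ) :
    ∑ l ∈ s, (gam R T n l : ℂ) * w l = ((T / n)⁻¹ : ℝ) *
      ∫ u in (0:ℝ)..T / n, ∑ l ∈ s,
        ((∫ v in l * (T / n)..(l + 1) * (T / n), R (v - u) : ℝ) : ℂ) * w l := by
  have hint : ∀ l : ℤ, IntervalIntegrable
      (fun u => ((∫ v in l * (T / n)..(l + 1) * (T / n), R (v - u) : ℝ) : ℂ) * w l)
      volume 0 (T / n) := fun l =>
    have := intervalIntegral.continuous_integral_comp_sub_right hR (l * (T / n)) ((l + 1) * (T / n))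
    Continuous.intervalIntegrable (by fun_prop) _ _
  rw [intervalIntegral.integral_finsetSum fun l _ => hint l, mul_sum]
  refine sum_congr rfl fun l _ => ?_
  simp only [gam, intervalIntegral.integral_mul_const, intervalIntegral.integral_ofReal, inv_div,
    mul_div_assoc]
  push_cast
  ring

theorem stmt_2_general (R : ℝ → ℝ) (hInt : Integrable R)
    (T : ℝ) (hT : 0 < T) (n : ℕ) (hn : 0 < n) (θ : ℝ) :
    ‖∑ l ∈ Finset.Icc (-((n : ℤ) - 1)) ((n : ℤ) - 1),
        (gam R T n l : ℂ) * Complex.exp (Complex.I * l * θ)‖ ≤ ∫ τ, |R τ| := by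
  have hc : 0 < T / n := by positivity
  rw [sum_gam_mul_eq_inv_mul_integral (fun _ _ => hInt.intervalIntegrable), norm_mul,
    Complex.norm_real, Real.norm_eq_abs, abs_of_pos (inv_pos.2 hc)]
  refine (mul_le_mul_of_nonneg_left
    (intervalIntegral.norm_integral_le_of_norm_le_const (C := ∫ τ, |R τ|) fun u _ => ?_)
    (inv_nonneg.2 hc.le)).trans_eq ?_
  · rw [← Ico_add_one_right_eq_Icc]
    exact norm_sum_mul_integral_window_le hInt hc.le (by omega) _
      (fun l => by simp [Complex.norm_exp]) u
  · rw [sub_zero, abs_of_pos hc]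
    field_simp

theorem stmt_2 (R : ℝ → ℝ) (hEven : ∀ τ, R (-τ) = R τ) (hCont : Continuous R)
    (hBdd : ∃ M, ∀ τ, |R τ| ≤ M) (hInt : Integrable R)
    (T : ℝ) (hT : 0 < T) (n : ℕ) (hn : 0 < n) (θ : ℝ) :
    ‖∑ l ∈ Finset.Icc (-((n : ℤ) - 1)) ((n : ℤ) - 1),
        (gam R T n l : ℂ) * Complex.exp (Complex.I * l * θ)‖ ≤ ∫ τ, |R τ| :=
  stmt_2_general R hInt T hT n hn θ
end

section
/- For any T > 0, any positive integer n, and any m ∈ {1,…,n}, the eigenvalue ψ̂_m = Σ_{k=0}^{n−1} γ̂_k e^{−2πimk/n} of the circulant matrix Â_{T,n} satisfies |ψ̂_m| ≤ 2∫_ℝ |R(τ)| dτ; consequently ‖Â_{T,n}‖₂ ≤ 2∫_ℝ |R(τ)| dτ uniformly over all T > 0 and n ∈ ℕ. -/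
open MeasureTheory Filter Finset Real

/-- `γ̂_0 = γ_0` and `γ̂_k = γ_k + γ_{n-k}` for `1 ≤ k ≤ n-1`. -/
noncomputable def gamHat (R : ℝ → ℝ) (T : ℝ) (n : ℕ) (k : ℕ) : ℝ :=
  if k = 0 then gam R T n 0 else gam R T n k + gam R T n ((n : ℤ) - k)

/-- The `n × n` circulant matrix `Â_{T,n}` with `(i,j)`-entry `γ̂_{(j-i) mod n}`
(`j - i` is subtraction in `Fin n`, i.e. subtraction mod `n`). -/
noncomputable def AHat (R : ℝ → ℝ) (T : ℝ) (n : ℕ) : Matrix (Fin n) (Fin n) ℝ :=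
  fun i j => gamHat R T n ((j - i : Fin n) : ℕ)

/-- `ψ̂_m = Σ_{k=0}^{n-1} γ̂_k e^{-2πimk/n}`, the eigenvalues of `Â_{T,n}`. -/
noncomputable def psiHat (R : ℝ → ℝ) (T : ℝ) (n : ℕ) (m : ℕ) : ℂ :=
  ∑ k ∈ Finset.range n,
    (gamHat R T n k : ℂ) * Complex.exp (-2 * Real.pi * Complex.I * m * k / n)

/-!
Write `h = T / n`. Up to the factor `h⁻¹`, `γ_l` is the integral of `R (v - u)` over the cell
`[0, h] × [l h, (l + 1) h]`; for fixed `u` the cells with `0 ≤ l < N` tile the interval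
`[-u, N h - u]`, so `∑ |γ_l| ≤ ∫ |R|`. Since `γ̂_k = γ_k + γ_{n-k}`, this gives
`∑ |γ̂_k| ≤ 2 ∫ |R|`. That bounds every `ψ̂_m` by the triangle inequality, and every absolute
row and column sum of the circulant matrix `Â`, hence its `ℓ²` operator norm by the Schur test.
-/

lemma Matrix.opNorm_toEuclideanCLM_le_of_sum_abs_le {ι : Type*} [Fintype ι] [DecidableEq ι]
    (A : Matrix ι ι ℝ) {C : ℝ} (hC : 0 ≤ C) (hrow : ∀ i, ∑ j, |A i j| ≤ C)
    (hcol : ∀ j, ∑ i, |A i j| ≤ C) :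
    ‖toEuclideanCLM (𝕜 := ℝ) A‖ ≤ C := by
  refine ContinuousLinearMap.opNorm_le_bound _ hC fun x => ?_
  have hrow_sq : ∀ i, (∑ j, A i j * x j) ^ 2 ≤ C * ∑ j, |A i j| * x j ^ 2 := fun i =>
    calc (∑ j, A i j * x j) ^ 2 ≤ (∑ j, |A i j|) * ∑ j, |A i j| * x j ^ 2 :=
          sum_sq_le_sum_mul_sum_of_sq_le_mul _ (fun _ _ => abs_nonneg _)
            (fun _ _ => by positivity) fun j _ => by rw [mul_pow, ← sq_abs (A i j), sq, mul_assoc]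
      _ ≤ C * ∑ j, |A i j| * x j ^ 2 := by gcongr; exact hrow i
  have hsq : ‖toEuclideanCLM (𝕜 := ℝ) A x‖ ^ 2 ≤ (C * ‖x‖) ^ 2 :=
    calc ‖toEuclideanCLM (𝕜 := ℝ) A x‖ ^ 2 = ∑ i, (∑ j, A i j * x j) ^ 2 := by
          simp only [EuclideanSpace.real_norm_sq_eq]; rfl
      _ ≤ ∑ i, C * ∑ j, |A i j| * x j ^ 2 := Finset.sum_le_sum fun i _ => hrow_sq i
      _ = C * ∑ j, (∑ i, |A i j|) * x j ^ 2 := by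
          simp only [← Finset.mul_sum, Finset.sum_mul]; rw [Finset.sum_comm]
      _ ≤ C * ∑ j, C * x j ^ 2 := by gcongr with j; exact hcol j
      _ = (C * ‖x‖) ^ 2 := by
          rw [mul_pow, EuclideanSpace.real_norm_sq_eq, Finset.mul_sum, Finset.mul_sum]
          exact Finset.sum_congr rfl fun _ _ => by ring
  exact (pow_le_pow_iff_left₀ (norm_nonneg _) (by positivity) two_ne_zero).mp hsq

lemma Matrix.opNorm_toEuclideanCLM_of_sub_le {n : ℕ} (v : Fin n → ℝ) :
    ‖toEuclideanCLM (𝕜 := ℝ) (of fun i j : Fin n => v (j - i))‖ ≤ ∑ k, |v k| := by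
  refine opNorm_toEuclideanCLM_le_of_sum_abs_le _ (by positivity) (fun i => ?_) fun j => ?_
  · have : NeZero n := ⟨i.pos.ne'⟩
    exact ((Equiv.subRight i).sum_comp fun k => |v k|).le
  · have : NeZero n := ⟨j.pos.ne'⟩
    exact ((Equiv.subLeft j).sum_comp fun k => |v k|).le

lemma continuous_intervalIntegral_comp_sub {f : ℝ → ℝ}
    (hf : ∀ a b, IntervalIntegrable f volume a b) (a b : ℝ) :
    Continuous fun u => ∫ v in a..b, f (v - u) := by
  have hF := intervalIntegral.continuous_primitive hf 0
  have hdiff : (fun u => ∫ v in a..b, f (v - u)) =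
      fun u => (∫ t in 0..b - u, f t) - ∫ t in 0..a - u, f t := by
    funext u
    rw [intervalIntegral.integral_comp_sub_right,
      intervalIntegral.integral_interval_sub_left (hf _ _) (hf _ _)]
  rw [hdiff]
  exact (hF.comp (continuous_const.sub continuous_id)).sub
    (hF.comp (continuous_const.sub continuous_id))

lemma sum_abs_integral_integral_comp_sub_le {f : ℝ → ℝ} (hf : Integrable f) {h : ℝ}
    (hh : 0 ≤ h) (N : ℕ) :
    ∑ l ∈ range N, |∫ u in 0..h, ∫ v in l * h..(l + 1) * h, f (v - u)| ≤
      h * ∫ τ, |f τ| := by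
  have hf_abs : Integrable fun τ => |f τ| := hf.abs
  set g : ℕ → ℝ → ℝ := fun l u => ∫ v in l * h..(l + 1) * h, |f (v - u)|
  have hg : ∀ l, Continuous (g l) := fun l =>
    continuous_intervalIntegral_comp_sub (fun _ _ => hf_abs.intervalIntegrable) _ _
  have hsum_g : ∀ u, ∑ l ∈ range N, g l u ≤ ∫ τ, |f τ| := fun u =>
    calc ∑ l ∈ range N, g l u = ∫ v in (0 : ℝ)..N * h, |f (v - u)| := by
          have := intervalIntegral.sum_integral_adjacent_intervals (a := fun k : ℕ => k * h)
            (n := N) fun k _ => (hf_abs.comp_sub_right u).intervalIntegrable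
          simpa [g] using this
      _ = ∫ τ in Set.Ioc (-u) (N * h - u), |f τ| := by
          rw [intervalIntegral.integral_comp_sub_right (fun τ => |f τ|),
            intervalIntegral.integral_of_le (by linarith [mul_nonneg N.cast_nonneg hh])]
          simp
      _ ≤ ∫ τ, |f τ| := setIntegral_le_integral hf_abs (.of_forall fun _ => abs_nonneg _)
  calc ∑ l ∈ range N, |∫ u in 0..h, ∫ v in l * h..(l + 1) * h, f (v - u)|
      ≤ ∑ l ∈ range N, ∫ u in 0..h, g l u := by
        gcongr with l
        rw [← Real.norm_eq_abs]
        refine intervalIntegral.norm_integral_le_of_norm_le hh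
          (.of_forall fun u _ => ?_) ((hg l).intervalIntegrable _ _)
        exact intervalIntegral.norm_integral_le_integral_norm (by nlinarith)
    _ = ∫ u in 0..h, ∑ l ∈ range N, g l u :=
        (intervalIntegral.integral_finsetSum fun l _ => (hg l).intervalIntegrable _ _).symm
    _ ≤ ∫ _ in 0..h, ∫ τ, |f τ| :=
        intervalIntegral.integral_mono_on hh
          ((continuous_finsetSum _ fun l _ => hg l).intervalIntegrable _ _)
          intervalIntegrable_const fun u _ => hsum_g u
    _ = h * ∫ τ, |f τ| := by simp

section

variable (R : ℝ → ℝ) (T : ℝ) (n : ℕ)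

lemma gam_eq (l : ℤ) :
    gam R T n l =
      (T / n)⁻¹ * ∫ u in 0..T / n, ∫ v in l * (T / n)..(l + 1) * (T / n), R (v - u) := by
  simp only [gam, inv_div, mul_div_assoc]

variable {R T}

lemma sum_abs_gam_le (hR : Integrable R) (hT : 0 ≤ T) (N : ℕ) :
    ∑ l ∈ range N, |gam R T n l| ≤ ∫ τ, |R τ| := by
  have hh : 0 ≤ T / n := by positivity
  have hI : 0 ≤ ∫ τ, |R τ| := integral_nonneg fun _ => abs_nonneg _
  calc ∑ l ∈ range N, |gam R T n l|
      = (T / n)⁻¹ *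
          ∑ l ∈ range N, |∫ u in 0..T / n, ∫ v in l * (T / n)..(l + 1) * (T / n), R (v - u)| := by
        simp only [gam_eq, Int.cast_natCast, abs_mul, abs_inv, abs_of_nonneg hh, mul_sum]
    _ ≤ (T / n)⁻¹ * (T / n * ∫ τ, |R τ|) := by
        gcongr; exact sum_abs_integral_integral_comp_sub_le hR hh N
    _ ≤ ∫ τ, |R τ| := by
        rcases hh.eq_or_lt with h0 | hpos
        · simp [← h0, hI]
        · rw [inv_mul_cancel_left₀ hpos.ne']

lemma sum_abs_gamHat_le (hR : Integrable R) (hT : 0 ≤ T) :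
    ∑ k ∈ range n, |gamHat R T n k| ≤ 2 * ∫ τ, |R τ| := by
  have hle : ∀ k, |gamHat R T n k| ≤ |gam R T n k| + |gam R T n ((n : ℤ) - k)| := by
    intro k
    unfold gamHat
    split_ifs with hk
    · simp [hk]
    · exact abs_add_le _ _
  have hreflect : ∑ k ∈ range n, |gam R T n ((n : ℤ) - k)| ≤ ∫ τ, |R τ| :=
    calc ∑ k ∈ range n, |gam R T n ((n : ℤ) - k)|
        = ∑ k ∈ range n, |gam R T n ((k + 1 : ℕ) : ℤ)| := by
          rw [← sum_range_reflect]
          refine sum_congr rfl fun k hk => ?_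
          congr 3
          have := mem_range.mp hk
          omega
      _ ≤ ∑ l ∈ range (n + 1), |gam R T n l| := by
          rw [sum_range_succ' _ n]
          exact le_add_of_nonneg_right (abs_nonneg _)
      _ ≤ ∫ τ, |R τ| := sum_abs_gam_le n hR hT _
  calc ∑ k ∈ range n, |gamHat R T n k|
      ≤ ∑ k ∈ range n, (|gam R T n k| + |gam R T n ((n : ℤ) - k)|) := sum_le_sum fun k _ => hle k
    _ ≤ 2 * ∫ τ, |R τ| := by
        rw [sum_add_distrib, two_mul]
        exact add_le_add (sum_abs_gam_le n hR hT n) hreflect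

lemma norm_psiHat_le (m : ℕ) : ‖psiHat R T n m‖ ≤ ∑ k ∈ range n, |gamHat R T n k| := by
  refine (norm_sum_le _ _).trans (sum_le_sum fun k _ => ?_)
  have harg : -2 * (π : ℂ) * Complex.I * m * k / n =
      ((-2 * π * m * k / n : ℝ) : ℂ) * Complex.I := by
    push_cast; ring
  rw [norm_mul, Complex.norm_real, Real.norm_eq_abs, harg, Complex.norm_exp_ofReal_mul_I, mul_one]

end

theorem stmt_4_general (R : ℝ → ℝ) (hInt : Integrable R)
    (T : ℝ) (hT : 0 < T) (n : ℕ) :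
    (∀ m ∈ Finset.Icc 1 n, ‖psiHat R T n m‖ ≤ 2 * ∫ τ, |R τ|) ∧
      ‖Matrix.toEuclideanCLM (𝕜 := ℝ) (AHat R T n)‖ ≤ 2 * ∫ τ, |R τ| := by
  have hsum := sum_abs_gamHat_le n hInt hT.le
  refine ⟨fun m _ => (norm_psiHat_le n m).trans hsum, ?_⟩
  calc ‖Matrix.toEuclideanCLM (𝕜 := ℝ) (AHat R T n)‖
      ≤ ∑ k : Fin n, |gamHat R T n k| :=
        Matrix.opNorm_toEuclideanCLM_of_sub_le fun k => gamHat R T n k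
    _ = ∑ k ∈ range n, |gamHat R T n k| := Fin.sum_univ_eq_sum_range (|gamHat R T n ·|) n
    _ ≤ 2 * ∫ τ, |R τ| := hsum

theorem stmt_4 (R : ℝ → ℝ) (hEven : ∀ τ, R (-τ) = R τ) (hCont : Continuous R)
    (hBdd : ∃ M, ∀ τ, |R τ| ≤ M) (hInt : Integrable R)
    (T : ℝ) (hT : 0 < T) (n : ℕ) (hn : 0 < n) :
    (∀ m ∈ Finset.Icc 1 n, ‖psiHat R T n m‖ ≤ 2 * ∫ τ, |R τ|) ∧
      ‖Matrix.toEuclideanCLM (𝕜 := ℝ) (AHat R T n)‖ ≤ 2 * ∫ τ, |R τ| :=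
  stmt_4_general R hInt T hT n
end
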